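/- Let δ > 0 and 1/2 < σ < 1, and let τ_λ := 1/x₂(λ) for λ large enough that δ²λ^{2σ} > λ. Then lim_{λ→+∞} λ u_λ(τ_λ) = 1 − e^{−1} and lim_{λ→+∞} λ^σ u_λ'(τ_λ) = e^{−1}/(2δ). -/

import Mathlib

/-!
Write `x₁ = δλ^σ (1 + r)` and `x₂ = δλ^σ (1 − r)` with `r = (1 − λ^{1−2σ}/δ²)^{1/2}`. At
`τ = 1/x₂` the slow exponential is exactly `e^{−1}`, while the fast one is
`exp(−(1 + r)/(1 − r))`. Since `2σ > 1`, `r → 1`, so the fast exponential vanishes in the limit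
and both quantities become explicit expressions in `r` and `e^{−1}` whose limits are read off at
`r = 1`.
-/

open Filter

/-- `x₁(λ) = δλ^σ + (δ²λ^{2σ} − λ)^{1/2}`, minus the smaller root of
`x² + 2δλ^σ x + λ` in the supercritical regime. -/
noncomputable def x1 (δ σ lam : ℝ) : ℝ :=
  δ * lam ^ σ + (δ ^ 2 * lam ^ (2 * σ) - lam) ^ ((1 : ℝ) / 2)

/-- `x₂(λ) = δλ^σ − (δ²λ^{2σ} − λ)^{1/2}`, minus the larger root of
`x² + 2δλ^σ x + λ` in the supercritical regime. -/
noncomputable def x2 (δ σ lam : ℝ) : ℝ :=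
  δ * lam ^ σ - (δ ^ 2 * lam ^ (2 * σ) - lam) ^ ((1 : ℝ) / 2)

/-- The solution of `u'' + 2δλ^σ u' + λu = 1`, `u(0) = u'(0) = 0`. -/
noncomputable def uSol (δ σ lam t : ℝ) : ℝ :=
  1 / lam + (x2 δ σ lam * Real.exp (-(x1 δ σ lam) * t)
    - x1 δ σ lam * Real.exp (-(x2 δ σ lam) * t)) / (lam * (x1 δ σ lam - x2 δ σ lam))

/-- The derivative of the above solution. -/
noncomputable def uDer (δ σ lam t : ℝ) : ℝ :=
  (Real.exp (-(x2 δ σ lam) * t) - Real.exp (-(x1 δ σ lam) * t))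
    / (x1 δ σ lam - x2 δ σ lam)

open Topology Real

noncomputable def rootRatio (δ σ lam : ℝ) : ℝ :=
  √(1 - lam ^ (1 - 2 * σ) / δ ^ 2)

section Evaluation

variable {δ σ lam : ℝ}

lemma disc_rpow_half_eq (hδ : 0 < δ) (hlam : 0 < lam) :
    (δ ^ 2 * lam ^ (2 * σ) - lam) ^ ((1 : ℝ) / 2) = δ * lam ^ σ * rootRatio δ σ lam := by
  have hfac : δ ^ 2 * lam ^ (2 * σ) - lam
      = (δ * lam ^ σ) ^ 2 * (1 - lam ^ (1 - 2 * σ) / δ ^ 2) := by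
    have hsq : lam ^ (2 * σ) = (lam ^ σ) ^ 2 := by
      rw [← rpow_natCast, ← rpow_mul hlam.le]; ring_nf
    have hprod : lam ^ (2 * σ) * lam ^ (1 - 2 * σ) = lam := by
      rw [← rpow_add hlam]; norm_num
    field_simp
    rw [← hsq]
    linear_combination hprod
  rw [← sqrt_eq_rpow, hfac, sqrt_mul (sq_nonneg _),
    sqrt_sq (mul_pos hδ (rpow_pos_of_pos hlam σ)).le, rootRatio]

lemma x1_eq (hδ : 0 < δ) (hlam : 0 < lam) :
    x1 δ σ lam = δ * lam ^ σ * (1 + rootRatio δ σ lam) := by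
  rw [x1, disc_rpow_half_eq hδ hlam]; ring

lemma x2_eq (hδ : 0 < δ) (hlam : 0 < lam) :
    x2 δ σ lam = δ * lam ^ σ * (1 - rootRatio δ σ lam) := by
  rw [x2, disc_rpow_half_eq hδ hlam]; ring

lemma x1_sub_x2_eq (hδ : 0 < δ) (hlam : 0 < lam) :
    x1 δ σ lam - x2 δ σ lam = 2 * δ * lam ^ σ * rootRatio δ σ lam := by
  rw [x1_eq hδ hlam, x2_eq hδ hlam]; ring

lemma exp_neg_x2_mul_inv_x2 (hδ : 0 < δ) (hlam : 0 < lam) (hr : rootRatio δ σ lam < 1) :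
    exp (-x2 δ σ lam * (1 / x2 δ σ lam)) = exp (-1) := by
  have : x2 δ σ lam ≠ 0 := by
    rw [x2_eq hδ hlam]
    exact (mul_pos (mul_pos hδ (rpow_pos_of_pos hlam σ)) (sub_pos.2 hr)).ne'
  field_simp

lemma exp_neg_x1_mul_inv_x2 (hδ : 0 < δ) (hlam : 0 < lam) (hr : rootRatio δ σ lam < 1) :
    exp (-x1 δ σ lam * (1 / x2 δ σ lam))
      = exp (-((1 + rootRatio δ σ lam) / (1 - rootRatio δ σ lam))) := by
  have hs : δ * lam ^ σ ≠ 0 := (mul_pos hδ (rpow_pos_of_pos hlam σ)).ne'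
  have h1r : 1 - rootRatio δ σ lam ≠ 0 := (sub_pos.2 hr).ne'
  rw [x1_eq hδ hlam, x2_eq hδ hlam]
  field_simp

lemma mul_uSol_inv_x2 (hδ : 0 < δ) (hlam : 0 < lam) (hr₀ : 0 < rootRatio δ σ lam)
    (hr₁ : rootRatio δ σ lam < 1) :
    lam * uSol δ σ lam (1 / x2 δ σ lam)
      = 1 + ((1 - rootRatio δ σ lam) * exp (-((1 + rootRatio δ σ lam) / (1 - rootRatio δ σ lam)))
          - (1 + rootRatio δ σ lam) * exp (-1)) / (2 * rootRatio δ σ lam) := by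
  rw [uSol, exp_neg_x2_mul_inv_x2 hδ hlam hr₁, exp_neg_x1_mul_inv_x2 hδ hlam hr₁,
    x1_sub_x2_eq hδ hlam, x1_eq hδ hlam, x2_eq hδ hlam]
  have hs : lam ^ σ ≠ 0 := (rpow_pos_of_pos hlam σ).ne'
  have hr : rootRatio δ σ lam ≠ 0 := hr₀.ne'
  field_simp

lemma rpow_mul_uDer_inv_x2 (hδ : 0 < δ) (hlam : 0 < lam) (hr : rootRatio δ σ lam < 1) :
    lam ^ σ * uDer δ σ lam (1 / x2 δ σ lam)
      = (exp (-1) - exp (-((1 + rootRatio δ σ lam) / (1 - rootRatio δ σ lam))))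
          / (2 * δ * rootRatio δ σ lam) := by
  rw [uDer, exp_neg_x2_mul_inv_x2 hδ hlam hr, exp_neg_x1_mul_inv_x2 hδ hlam hr,
    x1_sub_x2_eq hδ hlam, mul_div_assoc', mul_right_comm, mul_comm _ (lam ^ σ),
    mul_div_mul_left _ _ (rpow_pos_of_pos hlam σ).ne']

end Evaluation

section Asymptotics

variable {σ : ℝ}

lemma tendsto_rpow_one_sub_two_mul_div (hσ : 1 / 2 < σ) (δ : ℝ) :
    Tendsto (fun lam : ℝ => lam ^ (1 - 2 * σ) / δ ^ 2) atTop (𝓝 0) := by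
  have h := tendsto_rpow_neg_atTop (show 0 < 2 * σ - 1 by linarith)
  rw [neg_sub] at h
  simpa using h.div_const (δ ^ 2)

lemma tendsto_rootRatio (hσ : 1 / 2 < σ) (δ : ℝ) :
    Tendsto (rootRatio δ σ) atTop (𝓝 1) := by
  have h := ((tendsto_rpow_one_sub_two_mul_div hσ δ).const_sub 1).sqrt
  rwa [sub_zero, sqrt_one] at h

lemma eventually_rootRatio_mem_Ioo {δ : ℝ} (hδ : 0 < δ) (hσ : 1 / 2 < σ) :
    ∀ᶠ lam in atTop, 0 < rootRatio δ σ lam ∧ rootRatio δ σ lam < 1 := by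
  filter_upwards [eventually_gt_atTop 0,
    (tendsto_rpow_one_sub_two_mul_div hσ δ).eventually (gt_mem_nhds one_pos)]
    with lam hlam hsmall
  have hpos : 0 < lam ^ (1 - 2 * σ) / δ ^ 2 := by positivity
  exact ⟨sqrt_pos.2 (by linarith), (sqrt_lt' one_pos).2 (by linarith)⟩

lemma tendsto_exp_neg_one_add_div_one_sub {α : Type*} {l : Filter α} {r : α → ℝ}
    (hr : Tendsto r l (𝓝 1)) (hlt : ∀ᶠ a in l, r a < 1) :
    Tendsto (fun a => exp (-((1 + r a) / (1 - r a)))) l (𝓝 0) := by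
  have hgap : Tendsto (fun a => 1 - r a) l (𝓝[>] 0) :=
    tendsto_nhdsWithin_iff.2
      ⟨by simpa using hr.const_sub 1, hlt.mono fun _ h => sub_pos.2 h⟩
  have hnum : Tendsto (fun a => 1 + r a) l (𝓝 2) := by
    simpa [one_add_one_eq_two] using hr.const_add 1
  have hratio : Tendsto (fun a => (1 + r a) / (1 - r a)) l atTop := by
    simpa [div_eq_mul_inv] using hnum.pos_mul_atTop two_pos hgap.inv_tendsto_nhdsGT_zero
  exact tendsto_exp_neg_atTop_nhds_zero.comp hratio

end Asymptotics

theorem blowup_triple_supercritical_general (δ σ : ℝ) (hδ : 0 < δ) (hσ1 : 1 / 2 < σ) :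
    Tendsto (fun lam : ℝ => lam * uSol δ σ lam (1 / x2 δ σ lam)) atTop
      (nhds (1 - Real.exp (-1))) ∧
    Tendsto (fun lam : ℝ => lam ^ σ * uDer δ σ lam (1 / x2 δ σ lam)) atTop
      (nhds (Real.exp (-1) / (2 * δ))) := by
  have hr := tendsto_rootRatio hσ1 δ
  have hIoo := eventually_rootRatio_mem_Ioo hδ hσ1
  have hfast := tendsto_exp_neg_one_add_div_one_sub hr (hIoo.mono fun _ h => h.2)
  have hformulas : ∀ᶠ lam in atTop, 0 < lam ∧ 0 < rootRatio δ σ lam ∧ rootRatio δ σ lam < 1 :=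
    (eventually_gt_atTop 0).and hIoo
  constructor
  · refine Tendsto.congr' (hformulas.mono fun lam ⟨hlam, hr₀, hr₁⟩ =>
      (mul_uSol_inv_x2 hδ hlam hr₀ hr₁).symm) ?_
    rw [show 1 - exp (-1) = 1 + ((1 - 1) * 0 - (1 + 1) * exp (-1)) / (2 * 1) by ring]
    exact tendsto_const_nhds.add ((((tendsto_const_nhds.sub hr).mul hfast).sub
      ((tendsto_const_nhds.add hr).mul tendsto_const_nhds)).div
      (tendsto_const_nhds.mul hr) (by norm_num))
  · refine Tendsto.congr' (hformulas.mono fun lam ⟨hlam, _, hr₁⟩ =>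
      (rpow_mul_uDer_inv_x2 hδ hlam hr₁).symm) ?_
    rw [show exp (-1) / (2 * δ) = (exp (-1) - 0) / (2 * δ * 1) by ring]
    exact (tendsto_const_nhds.sub hfast).div (tendsto_const_nhds.mul hr) (by positivity)

/-- for `δ > 0`, `1/2 < σ < 1` and `τ_λ := 1/x₂(λ)`, one has
`λ u_λ(τ_λ) → 1 − e^{−1}` and `λ^σ u_λ'(τ_λ) → e^{−1}/(2δ)` as `λ → +∞`. -/
theorem blowup_triple_supercritical (δ σ : ℝ) (hδ : 0 < δ) (hσ1 : 1 / 2 < σ)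
    (hσ2 : σ < 1) :
    Tendsto (fun lam : ℝ => lam * uSol δ σ lam (1 / x2 δ σ lam)) atTop
      (nhds (1 - Real.exp (-1))) ∧
    Tendsto (fun lam : ℝ => lam ^ σ * uDer δ σ lam (1 / x2 δ σ lam)) atTop
      (nhds (Real.exp (-1) / (2 * δ))) :=
  blowup_triple_supercritical_general δ σ hδ hσ1
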